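/- arXiv:1806.09139 — 2 statements merged into one kernel-verified Lean document; each statement's English description precedes it below -/
import Mathlib

section
/- Let u : ℝ^N → ℝ be Lipschitz on B₁ with Lipschitz constant L and bounded by M on B₁ (with no integrability assumption outside B₂). Then the tail function Γ^u(x) = ∫_{ℝ^N \ B₂} [F_s(p_u(x,y)) - F_s(-p_u(x,y))] |x-y|^{-(N+2s-1)} dy is Lipschitz on B₁ with ‖Γ^u‖_{C^{0,1}(B₁)} ≤ C(N,s)(1 + L + M). -/
/-!
Write the integrand as `G (p_u(x,y)) ‖x - y‖^(-β)` with `G p = F_s p - F_s (-p)` and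
`β = N + 2s - 1 > N`. For `x ∈ B₁` and `y ∉ B₂` we have `‖x - y‖ ≥ (1 + ‖y‖)/3 ≥ 1`, so every
bound is dominated by the integrable weight `((1 + ‖y‖)/3)^(-β)`. The function `G` is bounded by
`∫ (1 + τ²)^(-(N+2s)/2)` and has derivative `G' p = -2 (1 + p²)^(-(N+2s)/2)`, so `|G'| ≤ 2` and
`|p G' p| ≤ 1`. The second bound is the point: it makes `d ↦ G (v / d)` 1-Lipschitz on `[1, ∞)`,
so moving `x` changes `G (p_u(x,y))` by at most `(2L + 1) ‖x₁ - x₂‖`, however large `u y` is.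
Integrating this pointwise estimate against the weight gives the theorem.
-/

open Set Metric MeasureTheory

namespace FractionalTail

noncomputable def bracketRpow (r τ : ℝ) : ℝ := (1 + τ ^ 2) ^ (-r / 2)

lemma bracketRpow_nonneg (r τ : ℝ) : 0 ≤ bracketRpow r τ := by
  unfold bracketRpow; positivity

lemma bracketRpow_neg (r τ : ℝ) : bracketRpow r (-τ) = bracketRpow r τ := by
  simp only [bracketRpow, neg_sq]

lemma bracketRpow_le_one {r : ℝ} (hr : 0 ≤ r) (τ : ℝ) : bracketRpow r τ ≤ 1 :=
  Real.rpow_le_one_of_one_le_of_nonpos (by nlinarith [sq_nonneg τ]) (by linarith)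

lemma abs_mul_bracketRpow_le {r : ℝ} (hr : 2 ≤ r) (τ : ℝ) : |τ| * bracketRpow r τ ≤ 1 / 2 := by
  have hinv : bracketRpow r τ ≤ (1 + τ ^ 2)⁻¹ := by
    rw [← Real.rpow_neg_one]
    exact Real.rpow_le_rpow_of_exponent_le (by nlinarith [sq_nonneg τ]) (by linarith)
  calc |τ| * bracketRpow r τ ≤ |τ| * (1 + τ ^ 2)⁻¹ := by gcongr
    _ ≤ 1 / 2 := by
      rw [← div_eq_mul_inv, div_le_iff₀ (by positivity), ← sq_abs τ]
      nlinarith [sq_nonneg (|τ| - 1)]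

lemma abs_neg_two_mul_bracketRpow_le {r : ℝ} (hr : 0 ≤ r) (τ : ℝ) :
    |-(2 * bracketRpow r τ)| ≤ 2 := by
  rw [abs_neg, abs_of_nonneg (by linarith [bracketRpow_nonneg r τ])]
  linarith [bracketRpow_le_one hr τ]

lemma abs_mul_neg_two_mul_bracketRpow_le {r : ℝ} (hr : 2 ≤ r) (τ : ℝ) :
    |τ * -(2 * bracketRpow r τ)| ≤ 1 := by
  rw [abs_mul, abs_neg, abs_of_nonneg (show 0 ≤ 2 * bracketRpow r τ by
    linarith [bracketRpow_nonneg r τ])]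
  linarith [abs_mul_bracketRpow_le hr τ]

lemma continuous_bracketRpow (r : ℝ) : Continuous (bracketRpow r) :=
  (continuous_const.add (continuous_pow 2)).rpow_const fun τ =>
    Or.inl (by positivity : (0 : ℝ) < 1 + τ ^ 2).ne'

lemma integrable_bracketRpow {r : ℝ} (hr : 1 < r) : Integrable (bracketRpow r) := by
  show Integrable fun τ : ℝ => (1 + τ ^ 2) ^ (-r / 2)
  simpa using
    integrable_rpow_neg_one_add_norm_sq (E := ℝ) (μ := volume) (r := r) (by simpa using hr)

section Profile

variable {g F : ℝ → ℝ}

lemma hasDerivAt_of_eq_integral_Ioi (hg : Continuous g) (hgi : Integrable g)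
    (hF : ∀ p, F p = ∫ τ in Ioi p, g τ) (p : ℝ) : HasDerivAt F (-g p) p := by
  have hF' : F = fun q => (∫ τ in Ioi 0, g τ) - ∫ τ in (0 : ℝ)..q, g τ := by
    ext q
    rw [hF, ← intervalIntegral.integral_interval_add_Ioi hgi.integrableOn hgi.integrableOn,
      intervalIntegral.integral_symm]
    ring
  rw [hF']
  exact ((hg.integral_hasStrictDerivAt 0 p).hasDerivAt).const_sub _

lemma abs_sub_comp_neg_le (hg : ∀ τ, 0 ≤ g τ) (hgi : Integrable g)
    (hF : ∀ p, F p = ∫ τ in Ioi p, g τ) (p : ℝ) : |F p - F (-p)| ≤ ∫ τ, g τ := by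
  have hbounds : ∀ q, 0 ≤ F q ∧ F q ≤ ∫ τ, g τ := fun q => by
    rw [hF]
    exact ⟨setIntegral_nonneg measurableSet_Ioi fun τ _ => hg τ,
      setIntegral_le_integral hgi (Filter.Eventually.of_forall hg)⟩
  obtain ⟨h₁, h₂⟩ := hbounds p
  obtain ⟨h₃, h₄⟩ := hbounds (-p)
  exact abs_sub_le_of_nonneg_of_le h₁ h₂ h₃ h₄

lemma hasDerivAt_sub_comp_neg {r : ℝ} (hr : 1 < r)
    (hF : ∀ p, F p = ∫ τ in Ioi p, bracketRpow r τ) (p : ℝ) :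
    HasDerivAt (fun q => F q - F (-q)) (-(2 * bracketRpow r p)) p := by
  have hF' := hasDerivAt_of_eq_integral_Ioi (continuous_bracketRpow r)
    (integrable_bracketRpow hr) hF
  refine ((hF' p).sub ((hF' (-p)).comp p (hasDerivAt_neg p))).congr_deriv ?_
  rw [bracketRpow_neg]
  ring

end Profile

lemma abs_comp_div_sub_comp_div_le {f f' : ℝ → ℝ} {K K' : ℝ}
    (hf : ∀ p, HasDerivAt f (f' p) p) (hK : ∀ p, |f' p| ≤ K) (hK' : ∀ p, |p * f' p| ≤ K')
    {a b d₁ d₂ : ℝ} (hd₁ : 1 ≤ d₁) (hd₂ : 1 ≤ d₂) :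
    |f (a / d₁) - f (b / d₂)| ≤ K * |a - b| + K' * |d₁ - d₂| := by
  have hK0 : 0 ≤ K := (abs_nonneg _).trans (hK 0)
  have hnum : |f (a / d₁) - f (b / d₁)| ≤ K * |a - b| := by
    have := convex_univ.norm_image_sub_le_of_norm_hasDerivWithin_le
      (fun p _ => (hf p).hasDerivWithinAt) (fun p _ => hK p) (mem_univ (b / d₁))
      (mem_univ (a / d₁))
    refine this.trans (mul_le_mul_of_nonneg_left ?_ hK0)
    rw [Real.norm_eq_abs, ← sub_div, abs_div, abs_of_pos (show 0 < d₁ by linarith)]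
    exact div_le_self (abs_nonneg _) hd₁
  -- `d ↦ f (b / d)` has derivative `-(b / d) f'(b / d) / d`, bounded by `K'` for `d ≥ 1`
  have hden : |f (b / d₁) - f (b / d₂)| ≤ K' * |d₁ - d₂| := by
    refine (convex_Ici (1 : ℝ)).norm_image_sub_le_of_norm_hasDerivWithin_le
      (f := fun d => f (b / d)) (f' := fun d => -(b / d * f' (b / d)) / d)
      (fun d hd => ?_) (fun d hd => ?_) hd₂ hd₁
    · have hd0 : d ≠ 0 := by have : (1 : ℝ) ≤ d := hd; positivity
      refine (((hf (b / d)).comp d ((hasDerivAt_const d b).fun_div (hasDerivAt_id' d)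
        hd0)).congr_deriv ?_).hasDerivWithinAt
      field_simp
      ring
    · have hd : (1 : ℝ) ≤ d := hd
      rw [Real.norm_eq_abs, abs_div, abs_neg, abs_of_pos (show 0 < d by linarith)]
      exact (div_le_self (abs_nonneg _) hd).trans (hK' _)
  calc |f (a / d₁) - f (b / d₂)|
      ≤ |f (a / d₁) - f (b / d₁)| + |f (b / d₁) - f (b / d₂)| := abs_sub_le _ _ _
    _ ≤ K * |a - b| + K' * |d₁ - d₂| := add_le_add hnum hden

lemma abs_rpow_neg_sub_rpow_neg_le {β c d₁ d₂ : ℝ} (hβ : 0 ≤ β) (hc : 1 ≤ c)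
    (hd₁ : c ≤ d₁) (hd₂ : c ≤ d₂) : |d₁ ^ (-β) - d₂ ^ (-β)| ≤ β * c ^ (-β) * |d₁ - d₂| := by
  have hc0 : 0 < c := by linarith
  have := (convex_Ici c).norm_image_sub_le_of_norm_hasDerivWithin_le
    (f := fun d => d ^ (-β)) (f' := fun d => -β * d ^ (-β - 1)) (C := β * c ^ (-β))
    (fun d hd => (Real.hasDerivAt_rpow_const
      (Or.inl (show (0 : ℝ) < d by have : c ≤ d := hd; linarith).ne')).hasDerivWithinAt)
    (fun d hd => ?_) hd₂ hd₁
  · simpa only [Real.norm_eq_abs] using this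
  · have hd : c ≤ d := hd
    rw [Real.norm_eq_abs, abs_mul, abs_neg, abs_of_nonneg hβ,
      abs_of_nonneg (Real.rpow_nonneg (by linarith) _)]
    gcongr
    calc d ^ (-β - 1) ≤ c ^ (-β - 1) := Real.rpow_le_rpow_of_nonpos hc0 hd (by linarith)
      _ ≤ c ^ (-β) := Real.rpow_le_rpow_of_exponent_le hc (by linarith)

lemma abs_setIntegral_le_mul_integral {α : Type*} [MeasurableSpace α] {μ : Measure α}
    {f w : α → ℝ} {S : Set α} {C : ℝ} (hS : MeasurableSet S) (hC : 0 ≤ C)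
    (hw : Integrable w μ) (hw0 : ∀ y, 0 ≤ w y) (hf : ∀ y ∈ S, |f y| ≤ C * w y) :
    |∫ y in S, f y ∂μ| ≤ C * ∫ y, w y ∂μ := by
  rw [← Real.norm_eq_abs]
  calc ‖∫ y in S, f y ∂μ‖ ≤ ∫ y in S, C * w y ∂μ :=
        norm_integral_le_of_norm_le (hw.integrableOn.const_mul C)
          ((ae_restrict_iff' hS).2 (Filter.Eventually.of_forall hf))
    _ ≤ C * ∫ y, w y ∂μ := by
      rw [integral_const_mul]
      exact mul_le_mul_of_nonneg_left
        (setIntegral_le_integral hw (Filter.Eventually.of_forall hw0)) hC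

section Tail

variable {E : Type*} [NormedAddCommGroup E]

noncomputable def tailIntegrand (G : ℝ → ℝ) (β : ℝ) (u : E → ℝ) (x y : E) : ℝ :=
  G ((u y - u x) / ‖x - y‖) * ‖x - y‖ ^ (-β)

noncomputable def tailWeight (β : ℝ) (y : E) : ℝ := ((1 + ‖y‖) / 3) ^ (-β)

lemma tailWeight_nonneg (β : ℝ) (y : E) : 0 ≤ tailWeight β y := by
  unfold tailWeight; positivity

lemma one_le_one_add_norm_div_three {y : E} (hy : y ∉ ball 0 2) : 1 ≤ (1 + ‖y‖) / 3 := by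
  rw [mem_ball_zero_iff, not_lt] at hy
  linarith

lemma one_add_norm_div_three_le_norm_sub {x y : E} (hx : x ∈ ball 0 1) (hy : y ∉ ball 0 2) :
    (1 + ‖y‖) / 3 ≤ ‖x - y‖ := by
  rw [mem_ball_zero_iff] at hx
  rw [mem_ball_zero_iff, not_lt] at hy
  have := norm_sub_norm_le y x
  rw [norm_sub_rev] at this
  linarith

variable {G G' : ℝ → ℝ} {A K K' L β : ℝ} {u : E → ℝ}

lemma abs_tailIntegrand_le (hG : ∀ p, |G p| ≤ A) (hβ : 0 ≤ β) {x y : E} (hx : x ∈ ball 0 1)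
    (hy : y ∉ ball 0 2) : |tailIntegrand G β u x y| ≤ A * tailWeight β y := by
  have hc := one_le_one_add_norm_div_three hy
  have hd := one_add_norm_div_three_le_norm_sub hx hy
  rw [tailIntegrand, abs_mul, abs_of_nonneg (Real.rpow_nonneg (norm_nonneg _) _)]
  exact mul_le_mul (hG _) (Real.rpow_le_rpow_of_nonpos (by linarith) hd (by linarith))
    (Real.rpow_nonneg (norm_nonneg _) _) ((abs_nonneg _).trans (hG 0))

lemma abs_tailIntegrand_sub_le (hG : ∀ p, HasDerivAt G (G' p) p) (hK : ∀ p, |G' p| ≤ K)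
    (hK' : ∀ p, |p * G' p| ≤ K') (hA : ∀ p, |G p| ≤ A) (hβ : 0 ≤ β) {x₁ x₂ y : E}
    (hx₁ : x₁ ∈ ball 0 1) (hx₂ : x₂ ∈ ball 0 1) (hy : y ∉ ball 0 2)
    (hu : |u x₁ - u x₂| ≤ L * ‖x₁ - x₂‖) :
    |tailIntegrand G β u x₁ y - tailIntegrand G β u x₂ y|
      ≤ (K * L + K' + A * β) * ‖x₁ - x₂‖ * tailWeight β y := by
  have hc := one_le_one_add_norm_div_three hy
  set c := (1 + ‖y‖) / 3
  set d₁ := ‖x₁ - y‖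
  set d₂ := ‖x₂ - y‖
  have hcd₁ : c ≤ d₁ := one_add_norm_div_three_le_norm_sub hx₁ hy
  have hcd₂ : c ≤ d₂ := one_add_norm_div_three_le_norm_sub hx₂ hy
  have hK0 : 0 ≤ K := (abs_nonneg _).trans (hK 0)
  have hK'0 : 0 ≤ K' := (abs_nonneg _).trans (hK' 0)
  have hA0 : 0 ≤ A := (abs_nonneg _).trans (hA 0)
  have hdd : |d₁ - d₂| ≤ ‖x₁ - x₂‖ := by
    simpa only [sub_sub_sub_cancel_right] using abs_norm_sub_norm_le (x₁ - y) (x₂ - y)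
  have hGd : |G ((u y - u x₁) / d₁) - G ((u y - u x₂) / d₂)| ≤ (K * L + K') * ‖x₁ - x₂‖ := by
    refine (abs_comp_div_sub_comp_div_le hG hK hK' (hc.trans hcd₁) (hc.trans hcd₂)).trans ?_
    rw [sub_sub_sub_cancel_left, abs_sub_comm, add_mul, mul_assoc]
    gcongr
  have hwd : |d₁ ^ (-β) - d₂ ^ (-β)| ≤ β * c ^ (-β) * ‖x₁ - x₂‖ :=
    (abs_rpow_neg_sub_rpow_neg_le hβ hc hcd₁ hcd₂).trans (by gcongr)
  have hw₁ : d₁ ^ (-β) ≤ c ^ (-β) :=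
    Real.rpow_le_rpow_of_nonpos (by linarith) hcd₁ (by linarith)
  calc |G ((u y - u x₁) / d₁) * d₁ ^ (-β) - G ((u y - u x₂) / d₂) * d₂ ^ (-β)|
      = |(G ((u y - u x₁) / d₁) - G ((u y - u x₂) / d₂)) * d₁ ^ (-β)
          + G ((u y - u x₂) / d₂) * (d₁ ^ (-β) - d₂ ^ (-β))| := by ring_nf
    _ ≤ (K * L + K') * ‖x₁ - x₂‖ * c ^ (-β) + A * (β * c ^ (-β) * ‖x₁ - x₂‖) := by
      refine (abs_add_le _ _).trans ?_
      rw [abs_mul, abs_mul, abs_of_nonneg (Real.rpow_nonneg (norm_nonneg _) _)]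
      gcongr
      exacts [(abs_nonneg _).trans hGd, hA _]
    _ = (K * L + K' + A * β) * ‖x₁ - x₂‖ * c ^ (-β) := by ring

variable [MeasurableSpace E] [BorelSpace E] {μ : Measure E}

lemma measurable_tailIntegrand (hG : Continuous G) (hu : Measurable u) (x : E) :
    Measurable (tailIntegrand G β u x) := by
  unfold tailIntegrand
  fun_prop

lemma integrable_tailWeight [NormedSpace ℝ E] [FiniteDimensional ℝ E] [μ.IsAddHaarMeasure]
    (hβ : Module.finrank ℝ E < β) : Integrable (tailWeight β) μ := by
  refine ((integrable_one_add_norm hβ).const_mul (3 ^ β)).congr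
    (Filter.Eventually.of_forall fun y => ?_)
  rw [tailWeight, Real.div_rpow (by positivity) zero_le_three, Real.rpow_neg zero_le_three,
    div_inv_eq_mul, mul_comm]

lemma integrableOn_tailIntegrand (hGc : Continuous G) (hG : ∀ p, |G p| ≤ A) (hβ : 0 ≤ β)
    (hu : Measurable u) {x : E} (hx : x ∈ ball 0 1) (hw : Integrable (tailWeight β) μ) :
    IntegrableOn (tailIntegrand G β u x) (ball 0 2)ᶜ μ :=
  (hw.integrableOn.const_mul A).mono' (measurable_tailIntegrand hGc hu x).aestronglyMeasurable
    ((ae_restrict_iff' measurableSet_ball.compl).2 (Filter.Eventually.of_forall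
      fun _ hy => abs_tailIntegrand_le hG hβ hx hy))

variable [NormedSpace ℝ E] [FiniteDimensional ℝ E] [μ.IsAddHaarMeasure]

theorem abs_integral_tailIntegrand_le (hG : ∀ p, |G p| ≤ A) (hβ : Module.finrank ℝ E < β)
    {x : E} (hx : x ∈ ball 0 1) :
    |∫ y in (ball 0 2)ᶜ, tailIntegrand G β u x y ∂μ| ≤ A * ∫ y, tailWeight β y ∂μ :=
  abs_setIntegral_le_mul_integral measurableSet_ball.compl ((abs_nonneg _).trans (hG 0))
    (integrable_tailWeight hβ) (tailWeight_nonneg β)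
    fun _ hy => abs_tailIntegrand_le hG ((Nat.cast_nonneg _).trans hβ.le) hx hy

theorem abs_integral_tailIntegrand_sub_le (hG : ∀ p, HasDerivAt G (G' p) p)
    (hK : ∀ p, |G' p| ≤ K) (hK' : ∀ p, |p * G' p| ≤ K') (hA : ∀ p, |G p| ≤ A)
    (hβ : Module.finrank ℝ E < β) (hu : Measurable u) (hL : 0 ≤ L) {x₁ x₂ : E}
    (hx₁ : x₁ ∈ ball 0 1) (hx₂ : x₂ ∈ ball 0 1) (hu₁₂ : |u x₁ - u x₂| ≤ L * ‖x₁ - x₂‖) :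
    |(∫ y in (ball 0 2)ᶜ, tailIntegrand G β u x₁ y ∂μ)
        - ∫ y in (ball 0 2)ᶜ, tailIntegrand G β u x₂ y ∂μ|
      ≤ (K * L + K' + A * β) * ‖x₁ - x₂‖ * ∫ y, tailWeight β y ∂μ := by
  have hβ0 : 0 ≤ β := (Nat.cast_nonneg _).trans hβ.le
  have hw := integrable_tailWeight (μ := μ) hβ
  have hGc : Continuous G := continuous_iff_continuousAt.2 fun p => (hG p).continuousAt
  rw [← integral_sub (integrableOn_tailIntegrand hGc hA hβ0 hu hx₁ hw)
    (integrableOn_tailIntegrand hGc hA hβ0 hu hx₂ hw)]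
  have hC : 0 ≤ (K * L + K' + A * β) * ‖x₁ - x₂‖ := by
    have := (abs_nonneg _).trans (hK 0)
    have := (abs_nonneg _).trans (hK' 0)
    have := (abs_nonneg _).trans (hA 0)
    positivity
  exact abs_setIntegral_le_mul_integral measurableSet_ball.compl hC hw (tailWeight_nonneg β)
    fun _ hy => abs_tailIntegrand_sub_le hG hK hK' hA hβ0 hx₁ hx₂ hy hu₁₂

end Tail

end FractionalTail

open FractionalTail

/-- Let `s ∈ (1/2,1)` and let `u : ℝ^N → ℝ` be measurable, Lipschitz on `B₁` with
constant `L` and bounded by `M` on `B₁` (no integrability assumption outside `B₂`).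
Then the tail function
`Γ^u(x) = ∫_{ℝ^N \ B₂} [F_s(p_u(x,y)) - F_s(-p_u(x,y))] |x-y|^{-(N+2s-1)} dy`
is Lipschitz on `B₁`, with `‖Γ^u‖_{C^{0,1}(B₁)} ≤ C(N,s)(1+L+M)`. -/
theorem stmt_6 (N : ℕ) (hN : 1 ≤ N) (s : ℝ) (hs : s ∈ Set.Ioo (1/2 : ℝ) 1)
    (Fs : ℝ → ℝ)
    (hFs : ∀ p : ℝ, Fs p = ∫ τ in Set.Ioi p, (1 + τ ^ 2) ^ (-((N : ℝ) + 2 * s) / 2)) :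
    ∃ C > 0, ∀ (u : EuclideanSpace ℝ (Fin N) → ℝ) (L M : ℝ)
      (Γ : EuclideanSpace ℝ (Fin N) → ℝ),
      Measurable u → 0 ≤ L → 0 ≤ M →
      (∀ x ∈ Metric.ball (0 : EuclideanSpace ℝ (Fin N)) 1,
        ∀ y ∈ Metric.ball (0 : EuclideanSpace ℝ (Fin N)) 1, |u x - u y| ≤ L * ‖x - y‖) →
      (∀ x ∈ Metric.ball (0 : EuclideanSpace ℝ (Fin N)) 1, |u x| ≤ M) →
      (∀ x, Γ x = ∫ y in (Metric.ball (0 : EuclideanSpace ℝ (Fin N)) 2)ᶜ,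
          (Fs ((u y - u x) / ‖x - y‖) - Fs (-((u y - u x) / ‖x - y‖))) *
            ‖x - y‖ ^ (-((N : ℝ) + 2 * s - 1))) →
      (∀ x ∈ Metric.ball (0 : EuclideanSpace ℝ (Fin N)) 1, |Γ x| ≤ C * (1 + L + M)) ∧
      (∀ x₁ ∈ Metric.ball (0 : EuclideanSpace ℝ (Fin N)) 1,
       ∀ x₂ ∈ Metric.ball (0 : EuclideanSpace ℝ (Fin N)) 1,
        |Γ x₁ - Γ x₂| ≤ C * (1 + L + M) * ‖x₁ - x₂‖) := by
  set r : ℝ := N + 2 * s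
  set β : ℝ := N + 2 * s - 1
  have hr : 2 ≤ r := by
    have : (1 : ℝ) ≤ N := by exact_mod_cast hN
    linarith [hs.1]
  have hβ : (Module.finrank ℝ (EuclideanSpace ℝ (Fin N)) : ℝ) < β := by simp [β]; linarith [hs.1]
  have hA : ∀ p, |Fs p - Fs (-p)| ≤ ∫ τ, bracketRpow r τ :=
    abs_sub_comp_neg_le (bracketRpow_nonneg r) (integrable_bracketRpow (by linarith)) hFs
  have hG := hasDerivAt_sub_comp_neg (by linarith) hFs
  set A := ∫ τ, bracketRpow r τ
  set I := ∫ y : EuclideanSpace ℝ (Fin N), tailWeight β y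
  have hA0 : 0 ≤ A := (abs_nonneg _).trans (hA 0)
  have hI0 : 0 ≤ I := integral_nonneg (tailWeight_nonneg β)
  have hβ0 : 0 ≤ β := (Nat.cast_nonneg _).trans hβ.le
  have hP : 0 ≤ (3 + A + A * β) * I := by positivity
  refine ⟨(3 + A + A * β) * I + 1, by positivity,
    fun u L M Γ hu hL hM hlip _ hΓ => ⟨fun x hx => ?_, fun x₁ hx₁ x₂ hx₂ => ?_⟩⟩
  · calc |Γ x| ≤ A * I := hΓ x ▸ abs_integral_tailIntegrand_le hA hβ hx
      _ ≤ ((3 + A + A * β) * I + 1) * (1 + L + M) := by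
        nlinarith [mul_nonneg (mul_nonneg hA0 hβ0) hI0, mul_nonneg hP (add_nonneg hL hM)]
  · calc |Γ x₁ - Γ x₂| ≤ (2 * L + 1 + A * β) * ‖x₁ - x₂‖ * I :=
          hΓ x₁ ▸ hΓ x₂ ▸ abs_integral_tailIntegrand_sub_le hG
            (abs_neg_two_mul_bracketRpow_le (by linarith)) (abs_mul_neg_two_mul_bracketRpow_le hr)
            hA hβ hu hL hx₁ hx₂ (hlip x₁ hx₁ x₂ hx₂)
      _ = (2 * L + 1 + A * β) * I * ‖x₁ - x₂‖ := by ring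
      _ ≤ ((3 + A + A * β) * I + 1) * (1 + L + M) * ‖x₁ - x₂‖ := by
        refine mul_le_mul_of_nonneg_right ?_ (norm_nonneg _)
        nlinarith [mul_nonneg (mul_nonneg hA0 hβ0) hI0, mul_nonneg hI0 hL,
          mul_nonneg (mul_nonneg hA0 hI0) hL, mul_nonneg (mul_nonneg (mul_nonneg hA0 hβ0) hI0) hL,
          mul_nonneg (add_nonneg hP zero_le_one) hM]
end

section
/- Let Θ : (0,∞) → [0,∞) be nonincreasing, γ ∈ (0,1), and let g ∈ L²_{loc}(ℝ^N) satisfy ‖g - g_{B_r}‖²_{L²(B_r)} ≤ r^{N+2γ} Θ(r) for every r > 0, where g_{B_r} is the mean of g over B_r. Fix r₀ > 0 and define w(x) = Θ(r₀)^{-1/2} r₀^{-γ} (g(r₀ x) - (g)_{B_{r₀}}(r₀·-average)), i.e. the rescaled, recentered function w(x) = Θ(r₀)^{-1/2} r₀^{-γ}(g(r₀x) - |B₁|^{-1}∫_{B₁} g(r₀ξ)dξ). Then there is C = C(N, γ) with ‖w‖²_{L²(B_R)} ≤ C R^{N+2γ} for every R ≥ 1. -/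
open Set Metric MeasureTheory Module

/-! Comparing the means `m ρ` of `g` on `B_ρ` and `B_{2ρ}` through the oscillation bounds on both
balls gives `|m (2ρ) - m ρ| ≲ √(Θ r₀) ρ^γ` for `ρ ≥ r₀`. Since `γ > 0` these increments grow
geometrically along `ρ = 2^k r₀`, so their sum is dominated by its last term and
`|m σ - m r₀| ≲ √(Θ r₀) σ^γ`. Hence `∫_{B_ρ} (g - m r₀)² ≲ Θ r₀ ρ^(N+2γ)` for every `ρ ≥ r₀`,
and the theorem is this estimate rescaled by `x ↦ r₀ x`. -/

section SquareIntegrals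

variable {α : Type*} [MeasurableSpace α] {μ : Measure α}

theorem integral_add_sq_le {u v : α → ℝ} (hu : MemLp u 2 μ) (hv : MemLp v 2 μ) :
    ∫ x, (u x + v x) ^ 2 ∂μ ≤ 2 * ∫ x, u x ^ 2 ∂μ + 2 * ∫ x, v x ^ 2 ∂μ := by
  have hu2 := hu.integrable_sq.const_mul 2
  have hv2 := hv.integrable_sq.const_mul 2
  rw [← integral_const_mul, ← integral_const_mul, ← integral_add hu2 hv2]
  exact integral_mono (hu.add hv).integrable_sq (hu2.add hv2)
    fun x => by nlinarith [sq_nonneg (u x - v x)]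

variable {g : α → ℝ} {s t : Set α}

theorem setIntegral_sq_sub_le (hg : MemLp g 2 (μ.restrict s)) (hs : μ s ≠ ⊤) (a b : ℝ) :
    ∫ x in s, (g x - a) ^ 2 ∂μ ≤
      2 * ∫ x in s, (g x - b) ^ 2 ∂μ + 2 * (a - b) ^ 2 * μ.real s := by
  have := isFiniteMeasure_restrict.2 hs
  have h := integral_add_sq_le (hg.sub (memLp_const b)) (memLp_const (b - a))
  simp only [Pi.sub_apply, sub_add_sub_cancel, setIntegral_const, smul_eq_mul] at h
  nlinarith [h, sq_nonneg (a - b)]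

theorem sq_sub_mul_measureReal_le (hst : s ⊆ t) (hg : MemLp g 2 (μ.restrict t)) (ht : μ t ≠ ⊤)
    (a b : ℝ) :
    (a - b) ^ 2 * μ.real s ≤ 2 * ∫ x in s, (g x - a) ^ 2 ∂μ + 2 * ∫ x in t, (g x - b) ^ 2 ∂μ := by
  have := isFiniteMeasure_restrict.2 ht
  have := isFiniteMeasure_restrict.2 ((measure_mono hst).trans_lt ht.lt_top).ne
  have hgb : MemLp (fun x => g x - b) 2 (μ.restrict t) := hg.sub (memLp_const b)
  have hgs : MemLp g 2 (μ.restrict s) := hg.mono_measure (Measure.restrict_mono hst le_rfl)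
  have h := integral_add_sq_le ((memLp_const a).sub hgs)
    (hgb.mono_measure (Measure.restrict_mono hst le_rfl))
  simp only [Pi.sub_apply, sub_add_sub_cancel, setIntegral_const, smul_eq_mul, sub_sq_comm a] at h
  have hst' : ∫ x in s, (g x - b) ^ 2 ∂μ ≤ ∫ x in t, (g x - b) ^ 2 ∂μ :=
    setIntegral_mono_set hgb.integrable_sq (.of_forall fun _ => sq_nonneg _) hst.eventuallyLE
  linarith

end SquareIntegrals

theorem rpow_natCast_add_two_mul {ρ : ℝ} (hρ : 0 < ρ) (d : ℕ) (γ : ℝ) :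
    ρ ^ ((d : ℝ) + 2 * γ) = ρ ^ d * (ρ ^ γ) ^ 2 := by
  rw [Real.rpow_add hρ, Real.rpow_natCast, two_mul, Real.rpow_add hρ, sq]

theorem abs_sub_le_of_abs_two_mul_sub_le {f : ℝ → ℝ} {r c γ : ℝ} (hr : 0 < r) (hγ : 0 < γ)
    (hf : ∀ ρ ≥ r, |f (2 * ρ) - f ρ| ≤ c * ρ ^ γ) (K : ℕ) :
    |f (2 ^ K * r) - f r| ≤ c * (2 ^ K * r) ^ γ / (2 ^ γ - 1) := by
  have hq : 0 < (2 : ℝ) ^ γ - 1 := sub_pos.2 (Real.one_lt_rpow one_lt_two hγ)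
  induction K with
  | zero =>
    have hc : 0 ≤ c := nonneg_of_mul_nonneg_left ((abs_nonneg _).trans (hf r le_rfl))
      (Real.rpow_pos_of_pos hr γ)
    simp only [pow_zero, one_mul, sub_self, abs_zero]
    positivity
  | succ K ih =>
    have hρ : r ≤ 2 ^ K * r := le_mul_of_one_le_left hr.le (one_le_pow₀ one_le_two)
    rw [pow_succ', mul_assoc]
    calc |f (2 * (2 ^ K * r)) - f r|
        ≤ |f (2 * (2 ^ K * r)) - f (2 ^ K * r)| + |f (2 ^ K * r) - f r| := abs_sub_le _ _ _
      _ ≤ c * (2 ^ K * r) ^ γ + c * (2 ^ K * r) ^ γ / (2 ^ γ - 1) := add_le_add (hf _ hρ) ih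
      _ = c * (2 * (2 ^ K * r)) ^ γ / (2 ^ γ - 1) := by
          rw [Real.mul_rpow two_pos.le (by positivity)]
          field_simp
          ring

section Balls

variable {E F : Type*} [NormedAddCommGroup E] [NormedSpace ℝ E] [FiniteDimensional ℝ E]
  [MeasurableSpace E] (μ : Measure E) [μ.IsAddHaarMeasure]

theorem measureReal_ball_pos (x : E) {r : ℝ} (hr : 0 < r) : 0 < μ.real (ball x r) :=
  ENNReal.toReal_pos (measure_ball_pos μ x hr).ne' measure_ball_lt_top.ne

variable [BorelSpace E] [NormedAddCommGroup F] [NormedSpace ℝ F]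

theorem measureReal_ball_of_pos (x : E) {r : ℝ} (hr : 0 < r) :
    μ.real (ball x r) = r ^ finrank ℝ E * μ.real (ball (0 : E) 1) := by
  rw [measureReal_def, measureReal_def, Measure.addHaar_ball_of_pos μ x hr, ENNReal.toReal_mul,
    ENNReal.toReal_ofReal (by positivity)]

theorem setIntegral_comp_smul_ball (f : E → F) {c : ℝ} (hc : 0 < c) (R : ℝ) :
    ∫ x in ball 0 R, f (c • x) ∂μ = (c ^ finrank ℝ E)⁻¹ • ∫ y in ball 0 (c * R), f y ∂μ := by
  rw [Measure.setIntegral_comp_smul_of_pos μ f _ hc, _root_.smul_ball hc.ne', smul_zero,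
    Real.norm_of_nonneg hc.le]

theorem setAverage_comp_smul_ball (f : E → F) {c : ℝ} (hc : 0 < c) (R : ℝ) :
    ⨍ x in ball 0 R, f (c • x) ∂μ = ⨍ y in ball 0 (c * R), f y ∂μ := by
  rw [setAverage_eq, setAverage_eq, setIntegral_comp_smul_ball μ f hc, smul_smul, measureReal_def,
    measureReal_def, Measure.addHaar_ball_mul_of_pos μ 0 hc, ENNReal.toReal_mul,
    ENNReal.toReal_ofReal (by positivity), mul_inv, mul_comm]

theorem setIntegral_sq_mul_comp_smul_sub_setAverage_ball (g : E → ℝ) {c : ℝ} (hc : 0 < c)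
    (a R : ℝ) :
    ∫ x in ball 0 R, (a * (g (c • x) - ⨍ y in ball 0 1, g (c • y) ∂μ)) ^ 2 ∂μ =
      a ^ 2 * (c ^ finrank ℝ E)⁻¹ *
        ∫ y in ball 0 (c * R), (g y - ⨍ z in ball 0 c, g z ∂μ) ^ 2 ∂μ := by
  rw [setAverage_comp_smul_ball μ g hc, mul_one]
  simp only [mul_pow]
  rw [integral_const_mul, setIntegral_comp_smul_ball μ (fun y => (g y - _) ^ 2) hc, smul_eq_mul,
    mul_assoc]

noncomputable def campanatoConst (d : ℕ) (γ : ℝ) : ℝ :=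
  2 ^ ((d : ℝ) + 2 * γ) * (2 + 4 * (1 + 2 ^ ((d : ℝ) + 2 * γ)) / (2 ^ γ - 1) ^ 2)

theorem campanatoConst_pos (d : ℕ) (γ : ℝ) : 0 < campanatoConst d γ := by
  unfold campanatoConst
  positivity

variable {g : E → ℝ} {x : E} {γ A r₀ : ℝ}

theorem abs_setAverage_ball_two_mul_sub_le (hr₀ : 0 < r₀)
    (hg : ∀ ρ ≥ r₀, MemLp g 2 (μ.restrict (ball x ρ)))
    (hosc : ∀ ρ ≥ r₀, ∫ y in ball x ρ, (g y - ⨍ z in ball x ρ, g z ∂μ) ^ 2 ∂μ ≤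
      A * ρ ^ ((finrank ℝ E : ℝ) + 2 * γ))
    {ρ : ℝ} (hρ : r₀ ≤ ρ) :
    |⨍ z in ball x (2 * ρ), g z ∂μ - ⨍ z in ball x ρ, g z ∂μ| ≤
      √(2 * (1 + 2 ^ ((finrank ℝ E : ℝ) + 2 * γ)) * A / μ.real (ball (0 : E) 1)) * ρ ^ γ := by
  set V := μ.real (ball (0 : E) 1)
  set B := 2 * (1 + 2 ^ ((finrank ℝ E : ℝ) + 2 * γ)) * A / V with hB
  have hρ0 : 0 < ρ := hr₀.trans_le hρ
  have hV : 0 < V := measureReal_ball_pos μ 0 one_pos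
  have hsplit := sq_sub_mul_measureReal_le (ball_subset_ball (by linarith : ρ ≤ 2 * ρ))
    (hg _ (by linarith)) measure_ball_lt_top.ne (⨍ z in ball x ρ, g z ∂μ)
    (⨍ z in ball x (2 * ρ), g z ∂μ)
  rw [measureReal_ball_of_pos μ x hρ0] at hsplit
  have hsq : (⨍ z in ball x ρ, g z ∂μ - ⨍ z in ball x (2 * ρ), g z ∂μ) ^ 2 ≤ B * (ρ ^ γ) ^ 2 := by
    refine le_of_mul_le_mul_right ?_ (by positivity : 0 < ρ ^ finrank ℝ E * V)
    calc _ ≤ 2 * (A * ρ ^ ((finrank ℝ E : ℝ) + 2 * γ)) +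
          2 * (A * (2 * ρ) ^ ((finrank ℝ E : ℝ) + 2 * γ)) := by
          linarith [hosc ρ hρ, hosc (2 * ρ) (by linarith)]
      _ = B * (ρ ^ γ) ^ 2 * (ρ ^ finrank ℝ E * V) := by
          rw [Real.mul_rpow two_pos.le hρ0.le, rpow_natCast_add_two_mul hρ0, hB]
          field_simp
  calc _ = |⨍ z in ball x ρ, g z ∂μ - ⨍ z in ball x (2 * ρ), g z ∂μ| := abs_sub_comm _ _
    _ ≤ √(B * (ρ ^ γ) ^ 2) := Real.abs_le_sqrt hsq
    _ = √B * ρ ^ γ := by rw [Real.sqrt_mul' _ (by positivity), Real.sqrt_sq (by positivity)]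

theorem setIntegral_sq_sub_setAverage_ball_le (hr₀ : 0 < r₀) (hγ : 0 < γ) (hA : 0 ≤ A)
    (hg : ∀ ρ ≥ r₀, MemLp g 2 (μ.restrict (ball x ρ)))
    (hosc : ∀ ρ ≥ r₀, ∫ y in ball x ρ, (g y - ⨍ z in ball x ρ, g z ∂μ) ^ 2 ∂μ ≤
      A * ρ ^ ((finrank ℝ E : ℝ) + 2 * γ))
    {ρ : ℝ} (hρ : r₀ ≤ ρ) :
    ∫ y in ball x ρ, (g y - ⨍ z in ball x r₀, g z ∂μ) ^ 2 ∂μ ≤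
      campanatoConst (finrank ℝ E) γ * A * ρ ^ ((finrank ℝ E : ℝ) + 2 * γ) := by
  set e : ℝ := (finrank ℝ E : ℝ) + 2 * γ
  set V := μ.real (ball (0 : E) 1)
  set m : ℝ → ℝ := fun r => ⨍ z in ball x r, g z ∂μ
  have hV : 0 < V := measureReal_ball_pos μ 0 one_pos
  obtain ⟨n, hn, hn'⟩ := exists_nat_pow_near ((one_le_div hr₀).2 hρ) one_lt_two
  set σ := (2 : ℝ) ^ (n + 1) * r₀ with hσ_def
  have hρσ : ρ ≤ σ := ((div_lt_iff₀ hr₀).1 hn').le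
  have hσρ : σ ≤ 2 * ρ := by
    rw [hσ_def, pow_succ', mul_assoc]
    linarith [(le_div_iff₀ hr₀).1 hn]
  have hσ : r₀ ≤ σ := hρ.trans hρσ
  have hσ0 : 0 < σ := hr₀.trans_le hσ
  have := isFiniteMeasure_restrict.2 (measure_ball_lt_top (μ := μ) (x := x) (r := σ)).ne
  have hmean : (m r₀ - m σ) ^ 2 ≤ 2 * (1 + 2 ^ e) * A / V * (σ ^ γ) ^ 2 / (2 ^ γ - 1) ^ 2 := by
    have h := abs_sub_le_of_abs_two_mul_sub_le (f := m) hr₀ hγ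
      (fun _ hρ' => abs_setAverage_ball_two_mul_sub_le μ hr₀ hg hosc hρ') (n + 1)
    rw [abs_sub_comm] at h
    calc (m r₀ - m σ) ^ 2 ≤ (√(2 * (1 + 2 ^ e) * A / V) * σ ^ γ / (2 ^ γ - 1)) ^ 2 :=
          sq_le_sq' (abs_le.1 h).1 (abs_le.1 h).2
      _ = _ := by rw [div_pow, mul_pow, Real.sq_sqrt (by positivity)]
  calc ∫ y in ball x ρ, (g y - m r₀) ^ 2 ∂μ
      ≤ ∫ y in ball x σ, (g y - m r₀) ^ 2 ∂μ :=
        setIntegral_mono_set ((hg σ hσ).sub (memLp_const _)).integrable_sq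
          (.of_forall fun _ => sq_nonneg _) (ball_subset_ball hρσ).eventuallyLE
    _ ≤ 2 * ∫ y in ball x σ, (g y - m σ) ^ 2 ∂μ + 2 * (m r₀ - m σ) ^ 2 * μ.real (ball x σ) :=
        setIntegral_sq_sub_le (hg σ hσ) measure_ball_lt_top.ne _ _
    _ ≤ 2 * (A * σ ^ e) +
          2 * (2 * (1 + 2 ^ e) * A / V * (σ ^ γ) ^ 2 / (2 ^ γ - 1) ^ 2) *
            (σ ^ finrank ℝ E * V) := by
        rw [measureReal_ball_of_pos μ x hσ0]
        gcongr
        exact hosc σ hσ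
    _ = (2 + 4 * (1 + 2 ^ e) / (2 ^ γ - 1) ^ 2) * A * σ ^ e := by
        rw [rpow_natCast_add_two_mul hσ0]
        field_simp
        ring
    _ ≤ (2 + 4 * (1 + 2 ^ e) / (2 ^ γ - 1) ^ 2) * A * (2 * ρ) ^ e := by gcongr
    _ = campanatoConst (finrank ℝ E) γ * A * ρ ^ e := by
        rw [Real.mul_rpow two_pos.le (hr₀.le.trans hρ), campanatoConst]
        ring

end Balls

theorem stmt_12_general (N : ℕ) (γ : ℝ) (hγ : γ ∈ Set.Ioo (0:ℝ) 1) :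
    ∃ C > 0, ∀ (Θ : ℝ → ℝ) (g : EuclideanSpace ℝ (Fin N) → ℝ) (r₀ : ℝ),
      (∀ r, 0 ≤ Θ r) →
      (∀ r₁ r₂ : ℝ, 0 < r₁ → r₁ ≤ r₂ → Θ r₂ ≤ Θ r₁) →
      (∀ r > 0, IntegrableOn g (Metric.ball (0 : EuclideanSpace ℝ (Fin N)) r)) →
      (∀ r > 0, IntegrableOn (fun x => g x ^ 2)
        (Metric.ball (0 : EuclideanSpace ℝ (Fin N)) r)) →
      (∀ r > 0, ∫ x in Metric.ball (0 : EuclideanSpace ℝ (Fin N)) r,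
          (g x - ⨍ y in Metric.ball (0 : EuclideanSpace ℝ (Fin N)) r, g y) ^ 2 ≤
            r ^ ((N : ℝ) + 2 * γ) * Θ r) →
      0 < r₀ → 0 < Θ r₀ →
      ∀ R ≥ (1 : ℝ),
        ∫ x in Metric.ball (0 : EuclideanSpace ℝ (Fin N)) R,
          ((Θ r₀) ^ (-(1/2) : ℝ) * r₀ ^ (-γ) *
            (g (r₀ • x) - ⨍ y in Metric.ball (0 : EuclideanSpace ℝ (Fin N)) 1, g (r₀ • y))) ^ 2
          ≤ C * R ^ ((N : ℝ) + 2 * γ) := by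
  refine ⟨campanatoConst N γ, campanatoConst_pos N γ, ?_⟩
  intro Θ g r₀ _ hΘ_anti hg hg_sq hosc hr₀ hΘ R hR
  have hL2 : ∀ ρ ≥ r₀, MemLp g 2 (volume.restrict (ball (0 : EuclideanSpace ℝ (Fin N)) ρ)) :=
    fun ρ hρ => (memLp_two_iff_integrable_sq (hg ρ (hr₀.trans_le hρ)).aestronglyMeasurable).2
      (hg_sq ρ (hr₀.trans_le hρ))
  have hosc₀ : ∀ ρ ≥ r₀, ∫ x in ball (0 : EuclideanSpace ℝ (Fin N)) ρ,
      (g x - ⨍ y in ball 0 ρ, g y) ^ 2 ≤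
        Θ r₀ * ρ ^ ((finrank ℝ (EuclideanSpace ℝ (Fin N)) : ℝ) + 2 * γ) := fun ρ hρ => by
    rw [finrank_euclideanSpace_fin, mul_comm]
    exact (hosc ρ (hr₀.trans_le hρ)).trans
      (mul_le_mul_of_nonneg_left (hΘ_anti r₀ ρ hr₀ hρ) (Real.rpow_nonneg (hr₀.le.trans hρ) _))
  have hbound := setIntegral_sq_sub_setAverage_ball_le volume hr₀ hγ.1 hΘ.le hL2 hosc₀
    (le_mul_of_one_le_right hr₀.le hR)
  rw [finrank_euclideanSpace_fin] at hbound
  have hweight : (Θ r₀ ^ (-(1 / 2) : ℝ) * r₀ ^ (-γ)) ^ 2 = (Θ r₀ * r₀ ^ (2 * γ))⁻¹ := by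
    rw [mul_pow, mul_inv, ← Real.rpow_mul_natCast hΘ.le, ← Real.rpow_mul_natCast hr₀.le,
      ← Real.rpow_neg_one, ← Real.rpow_neg hr₀.le]
    push_cast
    ring_nf
  rw [setIntegral_sq_mul_comp_smul_sub_setAverage_ball volume g hr₀, finrank_euclideanSpace_fin,
    hweight]
  calc _ ≤ (Θ r₀ * r₀ ^ (2 * γ))⁻¹ * (r₀ ^ N)⁻¹ *
        (campanatoConst N γ * Θ r₀ * (r₀ * R) ^ ((N : ℝ) + 2 * γ)) := by gcongr
    _ = campanatoConst N γ * R ^ ((N : ℝ) + 2 * γ) := by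
        rw [Real.mul_rpow hr₀.le (by linarith), Real.rpow_add hr₀, Real.rpow_natCast]
        field_simp

/-- Scaling lemma.  Let `Θ : (0,∞) → [0,∞)` be nonincreasing, `γ ∈ (0,1)`, and let
`g ∈ L²_loc(ℝ^N)` satisfy `‖g - g_{B_r}‖²_{L²(B_r)} ≤ r^{N+2γ} Θ(r)` for all `r > 0`.
Fix `r₀ > 0` (with `Θ(r₀) > 0`) and set
`w(x) = Θ(r₀)^{-1/2} r₀^{-γ} (g(r₀ x) - ⨍_{B₁} g(r₀ ξ) dξ)`.
Then there is `C = C(N,γ)` with `‖w‖²_{L²(B_R)} ≤ C R^{N+2γ}` for all `R ≥ 1`. -/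
theorem stmt_12 (N : ℕ) (hN : 1 ≤ N) (γ : ℝ) (hγ : γ ∈ Set.Ioo (0:ℝ) 1) :
    ∃ C > 0, ∀ (Θ : ℝ → ℝ) (g : EuclideanSpace ℝ (Fin N) → ℝ) (r₀ : ℝ),
      (∀ r, 0 ≤ Θ r) →
      (∀ r₁ r₂ : ℝ, 0 < r₁ → r₁ ≤ r₂ → Θ r₂ ≤ Θ r₁) →
      (∀ r > 0, IntegrableOn g (Metric.ball (0 : EuclideanSpace ℝ (Fin N)) r)) →
      (∀ r > 0, IntegrableOn (fun x => g x ^ 2)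
        (Metric.ball (0 : EuclideanSpace ℝ (Fin N)) r)) →
      (∀ r > 0, ∫ x in Metric.ball (0 : EuclideanSpace ℝ (Fin N)) r,
          (g x - ⨍ y in Metric.ball (0 : EuclideanSpace ℝ (Fin N)) r, g y) ^ 2 ≤
            r ^ ((N : ℝ) + 2 * γ) * Θ r) →
      0 < r₀ → 0 < Θ r₀ →
      ∀ R ≥ (1 : ℝ),
        ∫ x in Metric.ball (0 : EuclideanSpace ℝ (Fin N)) R,
          ((Θ r₀) ^ (-(1/2) : ℝ) * r₀ ^ (-γ) *
            (g (r₀ • x) - ⨍ y in Metric.ball (0 : EuclideanSpace ℝ (Fin N)) 1, g (r₀ • y))) ^ 2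
          ≤ C * R ^ ((N : ℝ) + 2 * γ) :=
  stmt_12_general N γ hγ
end
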